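/- arXiv:2404.08554 — 8 statements merged into one kernel-verified Lean document; each statement's English description precedes it below -/
import Mathlib

section
/- For every T > 0 there exists a constant C_T depending only on T such that for all integers n ≥ 1 and 0 ≤ j < i ≤ n, all x, y ∈ [0,1] and all t ∈ [0,T], the inequality |(1/n²)·p_i(j, e^{t/n}) − λ_x(y,t)| ≤ C_T·(|i/n − x| + |j/n − y| + 1/n) holds. -/
/-- The jump rate `p_i(j,t)` of the left-inversion birth process of the Mallows process. -/
noncomputable def pRate (i j : ℕ) (t : ℝ) : ℝ :=
  if t = 1 then (1 / 2 : ℝ) * ((j : ℝ) + 1) * ((i : ℝ) - (j : ℝ) - 1)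
  else (1 / (1 - t)) *
    (((j : ℝ) + 1) - (i : ℝ) * t ^ (i - j - 1) * (t ^ (j + 1) - 1) / (t ^ i - 1))

/-- The rescaled rate `λ_x(y,t)`. -/
noncomputable def lam (x y t : ℝ) : ℝ :=
  if t = 0 then (1 / 2 : ℝ) * y * (x - y)
  else if x = 0 then (1 / t) * (-y + (1 - Real.exp (-t * y)) / t)
  else (1 / t) * (-y + x * Real.exp (t * x) * (1 - Real.exp (-t * y)) / (Real.exp (t * x) - 1))


/-- `g u = u / (1 - e^{-u})`, with removable singularity value `1` at `0`. -/
noncomputable def gfun (u : ℝ) : ℝ := if u = 0 then 1 else u / (1 - Real.exp (-u))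

lemma one_sub_exp_neg_pos {u : ℝ} (hu : 0 < u) : 0 < 1 - Real.exp (-u) := by
  have h := Real.exp_lt_one_iff.mpr (neg_neg_iff_pos.mpr hu)
  linarith

lemma one_sub_exp_neg_nonneg {u : ℝ} (hu : 0 ≤ u) : 0 ≤ 1 - Real.exp (-u) := by
  have : Real.exp (-u) ≤ Real.exp 0 := Real.exp_le_exp.2 (by linarith)
  simp only [Real.exp_zero] at this; linarith

lemma one_sub_exp_neg_le {u : ℝ} : 1 - Real.exp (-u) ≤ u := by
  have := Real.add_one_le_exp (-u); linarith

lemma exp_neg_le_one {u : ℝ} (hu : 0 ≤ u) : Real.exp (-u) ≤ 1 := by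
  have := one_sub_exp_neg_nonneg hu; linarith

lemma exp_neg_mul_exp {u : ℝ} : Real.exp (-u) * Real.exp u = 1 := by
  rw [← Real.exp_add]; simp

lemma gfun_ge_one {u : ℝ} (hu : 0 ≤ u) : 1 ≤ gfun u := by
  rcases eq_or_lt_of_le hu with h | h
  · simp [gfun, ← h]
  · rw [gfun, if_neg (ne_of_gt h), le_div_iff₀ (one_sub_exp_neg_pos h)]
    have := @one_sub_exp_neg_le u; linarith

lemma gfun_le {u : ℝ} (hu : 0 ≤ u) : gfun u ≤ 1 + u := by
  rcases eq_or_lt_of_le hu with h | h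
  · simp [gfun, ← h]
  · rw [gfun, if_neg (ne_of_gt h), div_le_iff₀ (one_sub_exp_neg_pos h)]
    have h1 := Real.add_one_le_exp u
    have h2 : Real.exp (-u) * Real.exp u = 1 := exp_neg_mul_exp
    have h3 : 0 < Real.exp (-u) := Real.exp_pos _
    nlinarith

lemma gfun_hasDeriv {w : ℝ} (hw : 0 < w) :
    HasDerivAt (fun u => u / (1 - Real.exp (-u)))
      ((1 * (1 - Real.exp (-w)) - w * (Real.exp (-w))) / (1 - Real.exp (-w)) ^ 2) w := by
  have h1 : HasDerivAt (fun u : ℝ => -u) (-1) w := (hasDerivAt_id w).neg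
  have h2 : HasDerivAt (fun u : ℝ => Real.exp (-u)) (Real.exp (-w) * (-1)) w :=
    (Real.hasDerivAt_exp (-w)).comp w h1
  have h3 : HasDerivAt (fun u : ℝ => 1 - Real.exp (-u)) (Real.exp (-w)) w := by
    simpa using h2.const_sub 1
  exact (hasDerivAt_id w).div h3 (ne_of_gt (one_sub_exp_neg_pos hw))

lemma gfun_deriv_bound {w Tb : ℝ} (hw : 0 < w) (hT : w ≤ Tb) :
    |(1 * (1 - Real.exp (-w)) - w * (Real.exp (-w))) / (1 - Real.exp (-w)) ^ 2| ≤
      Real.exp (2 * Tb) := by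
  set Ew := Real.exp (-w) with hEw
  have hE0 : 0 < Ew := Real.exp_pos _
  have hE1 : Ew ≤ 1 := exp_neg_le_one hw.le
  have hmul : Ew * Real.exp w = 1 := exp_neg_mul_exp
  have hlow : 1 - w ≤ Ew := by have := Real.add_one_le_exp (-w); linarith
  have hup : w + 1 ≤ Real.exp w := Real.add_one_le_exp w
  have hN0 : 0 ≤ 1 * (1 - Ew) - w * Ew := by nlinarith
  have hNw : 1 * (1 - Ew) - w * Ew ≤ w ^ 2 := by nlinarith
  have hden : w * Ew ≤ 1 - Ew := by nlinarith
  have hDpos : 0 < (1 - Ew) ^ 2 := by nlinarith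
  have hD : w ^ 2 * Ew ^ 2 ≤ (1 - Ew) ^ 2 := by
    have h := mul_self_le_mul_self (mul_nonneg hw.le hE0.le) hden
    nlinarith
  rw [abs_of_nonneg (div_nonneg hN0 hDpos.le)]
  have hstep : (1 * (1 - Ew) - w * Ew) / (1 - Ew) ^ 2 ≤ Real.exp (2 * w) := by
    rw [div_le_iff₀ hDpos]
    have hexp2 : Real.exp (2 * w) * Ew ^ 2 = 1 := by
      rw [hEw, sq, ← Real.exp_add, ← Real.exp_add, show 2 * w + (-w + -w) = 0 by ring,
        Real.exp_zero]
    have hEsq : 0 < Ew ^ 2 := by positivity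
    have hX : 0 < Real.exp (2 * w) := Real.exp_pos _
    nlinarith
  have : Real.exp (2 * w) ≤ Real.exp (2 * Tb) := Real.exp_le_exp.2 (by linarith)
  linarith

lemma gfun_lip_aux {Tb u₁ u₂ : ℝ} (h1 : 0 < u₁) (h12 : u₁ ≤ u₂) (hb : u₂ ≤ Tb) :
    |gfun u₂ - gfun u₁| ≤ Real.exp (2 * Tb) * |u₂ - u₁| := by
  have hderiv : ∀ w ∈ Set.Icc u₁ u₂,
      HasDerivWithinAt gfun
        ((1 * (1 - Real.exp (-w)) - w * (Real.exp (-w))) / (1 - Real.exp (-w)) ^ 2)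
        (Set.Icc u₁ u₂) w := by
    intro w hw
    have hw0 : 0 < w := lt_of_lt_of_le h1 hw.1
    refine ((gfun_hasDeriv hw0).hasDerivWithinAt).congr ?_ ?_
    · intro z hz
      have : 0 < z := lt_of_lt_of_le h1 hz.1
      simp [gfun, ne_of_gt this]
    · simp [gfun, ne_of_gt hw0]
  have hbound : ∀ w ∈ Set.Icc u₁ u₂,
      ‖(1 * (1 - Real.exp (-w)) - w * (Real.exp (-w))) / (1 - Real.exp (-w)) ^ 2‖ ≤
        Real.exp (2 * Tb) := by
    intro w hw
    rw [Real.norm_eq_abs]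
    exact gfun_deriv_bound (lt_of_lt_of_le h1 hw.1) (le_trans hw.2 hb)
  have := (convex_Icc u₁ u₂).norm_image_sub_le_of_norm_hasDerivWithin_le hderiv hbound
    (Set.left_mem_Icc.2 h12) (Set.right_mem_Icc.2 h12)
  simpa [Real.norm_eq_abs] using this

lemma gfun_lip {Tb u₁ u₂ : ℝ} (h1 : 0 ≤ u₁) (h2 : 0 ≤ u₂) (hb1 : u₁ ≤ Tb) (hb2 : u₂ ≤ Tb) :
    |gfun u₂ - gfun u₁| ≤ Real.exp (2 * Tb) * |u₂ - u₁| := by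
  have hTb : 0 ≤ Tb := le_trans h1 hb1
  have hexp1 : 1 ≤ Real.exp (2 * Tb) := by
    rw [show (1:ℝ) = Real.exp 0 by simp]; exact Real.exp_le_exp.2 (by linarith)
  -- auxiliary for the zero-endpoint case
  have hzero : ∀ u : ℝ, 0 ≤ u → u ≤ Tb → |gfun u - gfun 0| ≤ Real.exp (2 * Tb) * |u - 0| := by
    intro u hu huT
    have hg1 := gfun_ge_one hu
    have hg2 := gfun_le hu
    have : gfun (0:ℝ) = 1 := by simp [gfun]
    rw [this, abs_of_nonneg (by linarith : (0:ℝ) ≤ gfun u - 1), sub_zero,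
      abs_of_nonneg hu]
    nlinarith
  rcases le_total u₁ u₂ with h | h
  · rcases eq_or_lt_of_le h1 with hz | hpos
    · rw [← hz] at hb1 ⊢
      simpa using hzero u₂ h2 hb2
    · exact gfun_lip_aux hpos h hb2
  · rw [abs_sub_comm, abs_sub_comm u₂ u₁]
    rcases eq_or_lt_of_le h2 with hz | hpos
    · rw [← hz] at hb2 ⊢
      simpa using hzero u₁ h1 hb1
    · exact gfun_lip_aux hpos h hb1

/-- The common form of both `lam` and the rescaled `pRate`. -/
noncomputable def Gv (x y t : ℝ) : ℝ :=
  (gfun (t * x) * (1 - Real.exp (-t * y)) - t * y) / t ^ 2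

lemma v_sub_bound {v : ℝ} (hv : 0 ≤ v) : v - (1 - Real.exp (-v)) ≤ v ^ 2 := by
  have hE0 : 0 < Real.exp (-v) := Real.exp_pos _
  have hmul : Real.exp (-v) * Real.exp v = 1 := exp_neg_mul_exp
  have hup : v + 1 ≤ Real.exp v := Real.add_one_le_exp v
  have h1 : Real.exp (-v) * (1 + v) ≤ 1 := by nlinarith
  have h2 : 1 - Real.exp (-v) ≤ v := one_sub_exp_neg_le
  nlinarith

lemma Gv_bound {x y t : ℝ} (ht : 0 < t) (hx : 0 ≤ x) (hx1 : x ≤ 1) (hy : 0 ≤ y)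
    (hy1 : y ≤ 1) : |Gv x y t| ≤ 2 := by
  have htx : 0 ≤ t * x := mul_nonneg ht.le hx
  have hty : 0 ≤ t * y := mul_nonneg ht.le hy
  have hg1 := gfun_ge_one htx
  have hg2 := gfun_le htx
  have hB0 : 0 ≤ 1 - Real.exp (-(t * y)) := one_sub_exp_neg_nonneg hty
  have hB1 : 1 - Real.exp (-(t * y)) ≤ t * y := one_sub_exp_neg_le
  have hC0 : 0 ≤ t * y - (1 - Real.exp (-(t * y))) := by
    have := one_sub_exp_neg_le (u := t * y); linarith
  have hC1 : t * y - (1 - Real.exp (-(t * y))) ≤ (t * y) ^ 2 := v_sub_bound hty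
  have htx_t : t * x ≤ t := by nlinarith
  have hty_t : t * y ≤ t := by nlinarith
  rw [Gv, neg_mul, abs_div, abs_of_pos (by positivity : (0:ℝ) < t ^ 2),
    div_le_iff₀ (by positivity : (0:ℝ) < t ^ 2)]
  rw [abs_le]
  constructor <;> nlinarith

lemma Gv_lip_x {T t x₁ x₂ y : ℝ} (ht : 0 < t) (htT : t ≤ T)
    (hx₁ : 0 ≤ x₁) (hx₁1 : x₁ ≤ 1) (hx₂ : 0 ≤ x₂) (hx₂1 : x₂ ≤ 1)
    (hy : 0 ≤ y) (hy1 : y ≤ 1) :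
    |Gv x₂ y t - Gv x₁ y t| ≤ Real.exp (2 * T) * |x₂ - x₁| := by
  have key : Gv x₂ y t - Gv x₁ y t =
      (gfun (t * x₂) - gfun (t * x₁)) * (1 - Real.exp (-t * y)) / t ^ 2 := by
    rw [Gv, Gv]; ring
  have h1 : |gfun (t * x₂) - gfun (t * x₁)| ≤ Real.exp (2 * T) * (t * |x₂ - x₁|) := by
    have := gfun_lip (Tb := T) (mul_nonneg ht.le hx₁) (mul_nonneg ht.le hx₂)
      (by nlinarith) (by nlinarith)
    calc |gfun (t * x₂) - gfun (t * x₁)| ≤ Real.exp (2 * T) * |t * x₂ - t * x₁| := this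
      _ = Real.exp (2 * T) * (t * |x₂ - x₁|) := by
          rw [← mul_sub, abs_mul, abs_of_pos ht]
  have hty : 0 ≤ t * y := mul_nonneg ht.le hy
  have h2 : |1 - Real.exp (-t * y)| ≤ t := by
    rw [neg_mul, abs_of_nonneg (one_sub_exp_neg_nonneg hty)]
    have := one_sub_exp_neg_le (u := t * y); nlinarith
  have hexp : 0 < Real.exp (2 * T) := Real.exp_pos _
  rw [key, abs_div, abs_mul, abs_of_pos (by positivity : (0:ℝ) < t ^ 2),
    div_le_iff₀ (by positivity : (0:ℝ) < t ^ 2)]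
  have habs : 0 ≤ |x₂ - x₁| := abs_nonneg _
  have := mul_le_mul h1 h2 (abs_nonneg _) (by positivity)
  nlinarith

lemma Gv_lip_y {t x y₁ y₂ : ℝ} (ht : 0 < t) (hx : 0 ≤ x) (hx1 : x ≤ 1)
    (hy₁ : 0 ≤ y₁) (hy₁1 : y₁ ≤ 1) (hy₂ : 0 ≤ y₂) (hy₂1 : y₂ ≤ 1) :
    |Gv x y₂ t - Gv x y₁ t| ≤ 2 * |y₂ - y₁| := by
  set c := gfun (t * x) with hc
  have htx : 0 ≤ t * x := mul_nonneg ht.le hx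
  have hc1 : 1 ≤ c := gfun_ge_one htx
  have hc2 : c ≤ 1 + t * x := gfun_le htx
  set f : ℝ → ℝ := fun y => c * (1 - Real.exp (-t * y)) - t * y with hf
  have hderiv : ∀ w ∈ Set.Icc (0:ℝ) 1,
      HasDerivWithinAt f (c * (t * Real.exp (-t * w)) - t) (Set.Icc (0:ℝ) 1) w := by
    intro w hw
    have l1 : HasDerivAt (fun y : ℝ => -t * y) (-t) w := by
      simpa using (hasDerivAt_id w).const_mul (-t)
    have l2 : HasDerivAt (fun y : ℝ => Real.exp (-t * y)) (Real.exp (-t * w) * (-t)) w :=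
      (Real.hasDerivAt_exp (-t * w)).comp w l1
    have l3 : HasDerivAt (fun y : ℝ => c * (1 - Real.exp (-t * y)))
        (c * (t * Real.exp (-t * w))) w := by
      have := (l2.const_sub 1).const_mul c
      rw [show c * (t * Real.exp (-t * w)) = c * -(Real.exp (-t * w) * -t) by ring]
      exact this
    have l4 : HasDerivAt (fun y : ℝ => t * y) t w := by
      simpa using (hasDerivAt_id w).const_mul t
    exact (l3.sub l4).hasDerivWithinAt
  have hbound : ∀ w ∈ Set.Icc (0:ℝ) 1,
      ‖c * (t * Real.exp (-t * w)) - t‖ ≤ 2 * t ^ 2 := by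
    intro w hw
    obtain ⟨hw0, hw1⟩ := hw
    have htw : 0 ≤ t * w := mul_nonneg ht.le hw0
    have hE0 : 0 < Real.exp (-t * w) := Real.exp_pos _
    have hE1 : Real.exp (-t * w) ≤ 1 := by rw [neg_mul]; exact exp_neg_le_one htw
    have hE2 : 1 - Real.exp (-t * w) ≤ t * w := by
      rw [neg_mul]; exact one_sub_exp_neg_le
    rw [Real.norm_eq_abs, abs_le]
    have k1 : Real.exp (-t * w) ≤ c * Real.exp (-t * w) :=
      le_mul_of_one_le_left hE0.le hc1
    have k2 : c * Real.exp (-t * w) ≤ c := by nlinarith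
    constructor <;> nlinarith
  have hmvt := (convex_Icc (0:ℝ) 1).norm_image_sub_le_of_norm_hasDerivWithin_le hderiv hbound
    ⟨hy₁, hy₁1⟩ ⟨hy₂, hy₂1⟩
  rw [Real.norm_eq_abs, Real.norm_eq_abs] at hmvt
  have key : Gv x y₂ t - Gv x y₁ t = (f y₂ - f y₁) / t ^ 2 := by
    rw [Gv, Gv, hf, hc]; ring
  rw [key, abs_div, abs_of_pos (by positivity : (0:ℝ) < t ^ 2),
    div_le_iff₀ (by positivity : (0:ℝ) < t ^ 2)]
  nlinarith [abs_nonneg (y₂ - y₁)]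

set_option maxHeartbeats 1000000 in
lemma alg_id (E P Q t nn ii jj : ℝ) (hE : E ≠ 0) (h1E : E - 1 ≠ 0)
    (hPQ1 : P * Q - 1 ≠ 0) (hQ : Q ≠ 0) (hP : P ≠ 0) (ht : t ≠ 0) (hnn : nn ≠ 0) :
    (1 / nn ^ 2) * ((1 / (1 - E)) * ((jj + 1) - ii * P * (Q - 1) / (P * Q - 1))) =
      ((t * (ii / nn)) / (1 - (P * Q)⁻¹) * (1 - Q⁻¹) - t * ((jj + 1) / nn)) / t ^ 2 *
        (E⁻¹ * ((t / nn) / (1 - E⁻¹))) := by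
  have e1 : 1 - (P * Q)⁻¹ = (P * Q - 1) / (P * Q) := by field_simp
  have e2 : 1 - E⁻¹ = (E - 1) / E := by field_simp
  have e3 : 1 - Q⁻¹ = (Q - 1) / Q := by field_simp
  have h1E' : (1:ℝ) - E ≠ 0 := by intro h; apply h1E; linarith
  rw [e1, e2, e3]
  have key : (t * (ii / nn)) / ((P * Q - 1) / (P * Q)) * ((Q - 1) / Q) - t * ((jj + 1) / nn)
      = (t / nn) * (ii * P * (Q - 1) / (P * Q - 1) - (jj + 1)) := by
    field_simp
  rw [key]
  have e4 : E⁻¹ * (t / nn / ((E - 1) / E)) = (t / nn) / (E - 1) := by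
    field_simp
  rw [e4]
  field_simp
  ring



lemma exp_neg_gfun_close {u : ℝ} (hu : 0 ≤ u) : |Real.exp (-u) * gfun u - 1| ≤ 2 * u := by
  have h1 := gfun_ge_one hu
  have h2 := gfun_le hu
  have h3 : 0 < Real.exp (-u) := Real.exp_pos _
  have h4 : Real.exp (-u) ≤ 1 := exp_neg_le_one hu
  have h5 : 1 - Real.exp (-u) ≤ u := one_sub_exp_neg_le
  rw [abs_le]
  constructor <;> nlinarith

lemma lam_eq {x y t : ℝ} (hx : 0 ≤ x) (ht : 0 < t) : lam x y t = Gv x y t := by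
  rw [lam, if_neg (ne_of_gt ht), Gv]
  rcases eq_or_lt_of_le hx with h | h
  · rw [if_pos h.symm, ← h, mul_zero]
    have : gfun 0 = 1 := by simp [gfun]
    rw [this]
    field_simp
    ring
  · rw [if_neg (ne_of_gt h)]
    have htx : 0 < t * x := mul_pos ht h
    have hgeq : gfun (t * x) = (t * x) / (1 - Real.exp (-(t * x))) := by
      simp [gfun, ne_of_gt htx]
    rw [hgeq]
    have he1 : (0:ℝ) < Real.exp (t * x) - 1 := by
      have := Real.add_one_le_exp (t * x); linarith
    have he2 : (0:ℝ) < 1 - Real.exp (-(t * x)) := one_sub_exp_neg_pos htx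
    rw [Real.exp_neg]
    have hE : Real.exp (t * x) ≠ 0 := (Real.exp_pos _).ne'
    field_simp
    ring

set_option maxHeartbeats 2000000 in
lemma pRate_eq {n i j : ℕ} (hn : 1 ≤ n) (hij : j < i) {t : ℝ} (ht : 0 < t) :
    (1 / (n:ℝ) ^ 2) * pRate i j (Real.exp (t / n)) =
      Gv ((i:ℝ) / n) (((j:ℝ) + 1) / n) t * (Real.exp (-(t / n)) * gfun (t / n)) := by
  have hn0 : (0:ℝ) < n := by exact_mod_cast hn
  have hu : 0 < t / n := div_pos ht hn0
  set E := Real.exp (t / n) with hE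
  have hE1 : 1 < E := by
    have := Real.add_one_le_exp (t / n); rw [hE]; linarith
  have hE0 : (0:ℝ) < E := lt_trans one_pos hE1
  rw [pRate, if_neg (ne_of_gt hE1)]
  have hi1 : 1 ≤ i := by omega
  have hQ : Real.exp (t * (((j:ℝ) + 1) / n)) = E ^ (j + 1) := by
    rw [hE, ← Real.exp_nat_mul]
    congr 1
    push_cast
    field_simp
  have hR : Real.exp (t * ((i:ℝ) / n)) = E ^ i := by
    rw [hE, ← Real.exp_nat_mul]
    congr 1
    field_simp
  have hgi : gfun (t * ((i:ℝ) / n)) = (t * ((i:ℝ) / n)) / (1 - (E ^ i)⁻¹) := by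
    have hpos : 0 < t * ((i:ℝ) / n) := by
      apply mul_pos ht
      apply div_pos _ hn0
      exact_mod_cast hi1
    simp only [gfun, if_neg (ne_of_gt hpos)]
    rw [Real.exp_neg, hR]
  have hgu : gfun (t / n) = (t / n) / (1 - E⁻¹) := by
    simp only [gfun, if_neg (ne_of_gt hu)]
    rw [Real.exp_neg, hE]
  have hQ' : Real.exp (-t * (((j:ℝ) + 1) / n)) = (E ^ (j + 1))⁻¹ := by
    rw [neg_mul, Real.exp_neg, hQ]
  have hexpneg : Real.exp (-(t / n)) = E⁻¹ := by rw [Real.exp_neg, hE]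
  rw [Gv, hgi, hgu, hQ', hexpneg]
  have hpow : E ^ (i - j - 1) * E ^ (j + 1) = E ^ i := by
    rw [← pow_add]; congr 1; omega
  have hR1 : 1 < E ^ i := one_lt_pow₀ hE1 (by omega)
  rw [← hpow]
  exact alg_id E (E ^ (i - j - 1)) (E ^ (j + 1)) t n i j hE0.ne'
    (by nlinarith) (by rw [hpow]; nlinarith) (pow_pos hE0 _).ne' (pow_pos hE0 _).ne'
    ht.ne' hn0.ne'

lemma combine3 {C1 C2 C3 C u v w : ℝ} (h1 : C1 ≤ C) (h2 : C2 ≤ C) (h3 : C3 ≤ C)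
    (hu : 0 ≤ u) (hv : 0 ≤ v) (hw : 0 ≤ w) :
    C1 * u + C2 * v + C3 * w ≤ C * (u + v + w) := by
  have := add_le_add (add_le_add (mul_le_mul_of_nonneg_right h1 hu)
    (mul_le_mul_of_nonneg_right h2 hv)) (mul_le_mul_of_nonneg_right h3 hw)
  linarith

theorem stmt1 (T : ℝ) (hT : 0 < T) :
    ∃ C : ℝ, 0 < C ∧ ∀ (n i j : ℕ) (x y t : ℝ), 1 ≤ n → j < i → i ≤ n →
      x ∈ Set.Icc (0 : ℝ) 1 → y ∈ Set.Icc (0 : ℝ) 1 → t ∈ Set.Icc (0 : ℝ) T →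
      |(1 / (n : ℝ) ^ 2) * pRate i j (Real.exp (t / n)) - lam x y t| ≤
        C * (|(i : ℝ) / n - x| + |(j : ℝ) / n - y| + 1 / n) := by
  refine ⟨Real.exp (2 * T) + 4 * T + 2, by positivity, ?_⟩
  intro n i j x y t hn hij hin hx hy ht
  obtain ⟨hx0, hx1⟩ := hx
  obtain ⟨hy0, hy1⟩ := hy
  obtain ⟨ht0, htT⟩ := ht
  have hn0 : (0:ℝ) < n := by exact_mod_cast hn
  have hn1 : (1:ℝ) ≤ n := by exact_mod_cast hn
  have hin' : (i:ℝ) ≤ n := by exact_mod_cast hin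
  have hji' : (j:ℝ) + 1 ≤ i := by exact_mod_cast hij
  have hj0 : (0:ℝ) ≤ j := Nat.cast_nonneg j
  set a : ℝ := (i:ℝ) / n with ha
  set b : ℝ := (j:ℝ) / n with hb
  set b' : ℝ := ((j:ℝ) + 1) / n with hb'
  have ha0 : 0 ≤ a := by positivity
  have ha1 : a ≤ 1 := by rw [ha, div_le_one hn0]; linarith
  have hb0 : 0 ≤ b' := by rw [hb']; positivity
  have hb1 : b' ≤ 1 := by rw [hb', div_le_one hn0]; linarith
  have hb'y : |b' - y| ≤ |b - y| + 1 / n := by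
    have hbb' : b' - y = (b - y) + 1 / n := by rw [hb', hb]; ring
    rw [hbb']
    calc |(b - y) + 1/n| ≤ |b - y| + |1/(n:ℝ)| := abs_add_le _ _
      _ = |b - y| + 1/n := by rw [abs_of_pos (by positivity : (0:ℝ) < 1/(n:ℝ))]
  have hexpTpos : (0:ℝ) < Real.exp (2 * T) := Real.exp_pos _
  have hinvn : (0:ℝ) < 1 / n := by positivity
  rcases eq_or_lt_of_le ht0 with ht' | ht'
  · -- t = 0
    rw [← ht']
    rw [show (0:ℝ) / n = 0 by simp, Real.exp_zero, pRate, if_pos rfl, lam, if_pos rfl]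
    have key : 1 / (n:ℝ) ^ 2 * ((1/2 : ℝ) * ((j:ℝ) + 1) * ((i:ℝ) - (j:ℝ) - 1)) =
        (1/2) * b' * (a - b') := by
      rw [ha, hb']; field_simp; ring
    rw [key]
    have e1 : (1/2:ℝ) * b' * (a - b') - 1/2 * y * (x - y) =
        (1/2) * (b' - y) * (a - b') + (1/2) * y * ((a - x) - (b' - y)) := by ring
    have hab' : |a - b'| ≤ 1 := abs_le.mpr ⟨by linarith, by linarith⟩
    have h1 : |(1/2:ℝ) * (b' - y) * (a - b')| ≤ (1/2) * |b' - y| := by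
      rw [mul_assoc, abs_mul, abs_mul, abs_of_pos (by norm_num : (0:ℝ) < 1/2)]
      have h := mul_le_mul_of_nonneg_left hab' (abs_nonneg (b' - y))
      rw [mul_one] at h
      linarith
    have h2 : |(1/2:ℝ) * y * ((a - x) - (b' - y))| ≤ (1/2) * (|a - x| + |b' - y|) := by
      rw [mul_assoc, abs_mul, abs_mul, abs_of_pos (by norm_num : (0:ℝ) < 1/2)]
      have hy' : |y| ≤ 1 := abs_le.mpr ⟨by linarith, by linarith⟩
      have habs : |(a - x) - (b' - y)| ≤ |a - x| + |b' - y| := abs_sub _ _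
      have h := mul_le_mul hy' habs (abs_nonneg _) zero_le_one
      rw [one_mul] at h
      linarith
    calc |(1/2:ℝ) * b' * (a - b') - 1/2 * y * (x - y)|
        ≤ |(1/2:ℝ) * (b' - y) * (a - b')| + |(1/2:ℝ) * y * ((a - x) - (b' - y))| := by
          rw [e1]; exact abs_add_le _ _
      _ ≤ (1/2) * |a - x| + |b' - y| := by linarith
      _ ≤ (1/2) * |a - x| + |b - y| + 1/n := by linarith
      _ ≤ (Real.exp (2 * T) + 4 * T + 2) * (|a - x| + |b - y| + 1/n) := by
          have hc1 : (1/2:ℝ) ≤ Real.exp (2 * T) + 4 * T + 2 := by linarith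
          have hc2 : (1:ℝ) ≤ Real.exp (2 * T) + 4 * T + 2 := by linarith
          have := combine3 hc1 hc2 hc2 (abs_nonneg (a - x)) (abs_nonneg (b - y)) hinvn.le
          linarith
  · -- t > 0
    have htT' : t ≤ T := htT
    rw [pRate_eq hn hij ht', lam_eq hx0 ht']
    have hun : 0 < t / n := div_pos ht' hn0
    have hunT : t / n ≤ T * (1/n) := by
      rw [mul_one_div]
      exact (div_le_div_iff_of_pos_right hn0).mpr htT'
    have h1 : |Gv a b' t| ≤ 2 := Gv_bound ht' ha0 ha1 hb0 hb1
    have h2 : |Real.exp (-(t/n)) * gfun (t/n) - 1| ≤ 2 * (t/n) :=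
      exp_neg_gfun_close hun.le
    have h3 : |Gv a b' t - Gv x b' t| ≤ Real.exp (2*T) * |a - x| :=
      Gv_lip_x ht' htT' hx0 hx1 ha0 ha1 hb0 hb1
    have h4 : |Gv x b' t - Gv x y t| ≤ 2 * |b' - y| :=
      Gv_lip_y ht' hx0 hx1 hy0 hy1 hb0 hb1
    have split : Gv a b' t * (Real.exp (-(t/n)) * gfun (t/n)) - Gv x y t =
        Gv a b' t * ((Real.exp (-(t/n)) * gfun (t/n)) - 1) +
          ((Gv a b' t - Gv x b' t) + (Gv x b' t - Gv x y t)) := by ring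
    have hprod : |Gv a b' t * ((Real.exp (-(t/n)) * gfun (t/n)) - 1)| ≤ 2 * (2 * (t/n)) := by
      rw [abs_mul]
      have := mul_le_mul h1 h2 (abs_nonneg _) (by norm_num)
      linarith
    calc |Gv a b' t * (Real.exp (-(t/n)) * gfun (t/n)) - Gv x y t|
        ≤ |Gv a b' t * ((Real.exp (-(t/n)) * gfun (t/n)) - 1)| +
            (|Gv a b' t - Gv x b' t| + |Gv x b' t - Gv x y t|) := by
          rw [split]
          refine le_trans (abs_add_le _ _) ?_
          gcongr
          exact abs_add_le _ _
      _ ≤ 2 * (2 * (t/n)) + (Real.exp (2*T) * |a - x| + 2 * |b' - y|) := by linarith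
      _ ≤ 4 * (T * (1/n)) + Real.exp (2*T) * |a - x| + 2 * |b - y| + 2 * (1/n) := by
          linarith
      _ = Real.exp (2*T) * |a - x| + 2 * |b - y| + (4*T+2) * (1/n) := by ring
      _ ≤ (Real.exp (2 * T) + 4 * T + 2) * (|a - x| + |b - y| + 1/n) := by
          have hc1 : Real.exp (2*T) ≤ Real.exp (2 * T) + 4 * T + 2 := by linarith
          have hc2 : (2:ℝ) ≤ Real.exp (2 * T) + 4 * T + 2 := by linarith
          have hc3 : 4*T+2 ≤ Real.exp (2 * T) + 4 * T + 2 := by linarith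
          have := combine3 hc1 hc2 hc3 (abs_nonneg (a - x)) (abs_nonneg (b - y)) hinvn.le
          linarith
end

section
/- For every T > 0, the family of functions {t ↦ z_{x,a}(t) : x, a ∈ [0,1]} is uniformly equicontinuous on the interval [0,T]: for every ε > 0 there exists δ > 0 such that for all x, a ∈ [0,1] and all s, t ∈ [0,T] with |s − t| < δ one has |z_{x,a}(s) − z_{x,a}(t)| < ε. -/
/-- The limiting trajectory `z_{x,a}(t)`. -/
noncomputable def zfun (x a t : ℝ) : ℝ :=
  if t = 0 then a
  else (1 / t) * Real.log ((Real.exp (x * t) * (1 - a) + a * Real.exp t) /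
    (Real.exp (x * t) * (1 - a) + a))

noncomputable def psi (a s : ℝ) : ℝ := a * Real.exp s / ((1 - a) + a * Real.exp s)

lemma denom_pos {a : ℝ} (ha : a ∈ Set.Icc (0:ℝ) 1) (s : ℝ) :
    0 < (1 - a) + a * Real.exp s := by
  obtain ⟨h0, h1⟩ := ha
  rcases eq_or_lt_of_le h0 with h | h
  · simp [← h]
  · have := Real.exp_pos s
    nlinarith

lemma log_hasDerivAt {a : ℝ} (ha : a ∈ Set.Icc (0:ℝ) 1) (s : ℝ) :
    HasDerivAt (fun s => Real.log ((1 - a) + a * Real.exp s)) (psi a s) s := by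
  have h : HasDerivAt (fun s => (1 - a) + a * Real.exp s) (a * Real.exp s) s :=
    ((Real.hasDerivAt_exp s).const_mul a).const_add (1 - a)
  exact h.log (ne_of_gt (denom_pos ha s))

lemma psi_hasDerivAt {a : ℝ} (ha : a ∈ Set.Icc (0:ℝ) 1) (s : ℝ) :
    HasDerivAt (psi a)
      ((a * Real.exp s * ((1 - a) + a * Real.exp s) - a * Real.exp s * (a * Real.exp s)) /
        ((1 - a) + a * Real.exp s) ^ 2) s := by
  have hnum : HasDerivAt (fun s => a * Real.exp s) (a * Real.exp s) s :=
    (Real.hasDerivAt_exp s).const_mul a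
  have hden : HasDerivAt (fun s => (1 - a) + a * Real.exp s) (a * Real.exp s) s :=
    ((Real.hasDerivAt_exp s).const_mul a).const_add (1 - a)
  exact hnum.div hden (ne_of_gt (denom_pos ha s))

lemma psi_lip {a : ℝ} (ha : a ∈ Set.Icc (0:ℝ) 1) (p q : ℝ) :
    |psi a p - psi a q| ≤ |p - q| := by
  have key : ∀ s, ‖((a * Real.exp s * ((1 - a) + a * Real.exp s) -
      a * Real.exp s * (a * Real.exp s)) / ((1 - a) + a * Real.exp s) ^ 2)‖ ≤ 1 := by
    intro s
    have hd := denom_pos ha s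
    have he := Real.exp_pos s
    obtain ⟨h0, h1⟩ := ha
    have hnn : 0 ≤ a * Real.exp s * ((1 - a) + a * Real.exp s) -
        a * Real.exp s * (a * Real.exp s) := by
      nlinarith [mul_nonneg (mul_nonneg h0 he.le) (sub_nonneg.2 h1)]
    rw [Real.norm_eq_abs, abs_div, abs_of_nonneg hnn, abs_of_nonneg (by positivity)]
    rw [div_le_one (by positivity)]
    nlinarith [mul_nonneg (mul_nonneg h0 he.le) (sub_nonneg.2 h1), sq_nonneg (1 - a),
      mul_nonneg h0 he.le, sub_nonneg.2 h1]
  have := Convex.norm_image_sub_le_of_norm_hasDerivWithin_le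
    (f := psi a) (s := Set.univ) (C := 1)
    (fun s _ => (psi_hasDerivAt ha s).hasDerivWithinAt)
    (fun s _ => key s) convex_univ (Set.mem_univ q) (Set.mem_univ p)
  simpa [Real.norm_eq_abs] using this

lemma psi_cont {a : ℝ} (ha : a ∈ Set.Icc (0:ℝ) 1) : Continuous (psi a) := by
  exact Continuous.div (by continuity) (by continuity)
    (fun s => ne_of_gt (denom_pos ha s))

lemma zrep {x a : ℝ} (hx : x ∈ Set.Icc (0:ℝ) 1) (ha : a ∈ Set.Icc (0:ℝ) 1) (t : ℝ) :
    zfun x a t = ∫ u in (0:ℝ)..1, psi a ((u - x) * t) := by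
  rcases eq_or_ne t 0 with rfl | ht
  · have : ∀ u : ℝ, psi a ((u - x) * 0) = a := by
      intro u
      simp [psi]
    simp only [this, intervalIntegral.integral_const, smul_eq_mul]
    simp [zfun]
  · have hderiv : ∀ u ∈ Set.uIcc (0:ℝ) 1,
        HasDerivAt (fun u : ℝ => (1/t) * Real.log ((1 - a) + a * Real.exp ((u - x) * t)))
          (psi a ((u - x) * t)) u := by
      intro u _
      have hinner : HasDerivAt (fun u : ℝ => (u - x) * t) t u := by
        simpa using ((hasDerivAt_id u).sub_const x).mul_const t
      have hcomp := (log_hasDerivAt ha ((u - x) * t)).comp u hinner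
      have := hcomp.const_mul (1/t)
      rw [mul_comm (psi a _) t, ← mul_assoc, one_div_mul_cancel ht, one_mul] at this
      exact this
    have hcont : Continuous fun u : ℝ => psi a ((u - x) * t) :=
      (psi_cont ha).comp (by continuity)
    have hFTC := intervalIntegral.integral_eq_sub_of_hasDerivAt hderiv
      (hcont.intervalIntegrable 0 1)
    rw [hFTC, zfun, if_neg ht]
    rw [← mul_sub, ← Real.log_div (ne_of_gt (denom_pos ha _)) (ne_of_gt (denom_pos ha _))]
    congr 2
    have hE := Real.exp_pos (x * t)
    have hN : Real.exp (x * t) * (1 - a) + a * Real.exp t =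
        Real.exp (x * t) * ((1 - a) + a * Real.exp ((1 - x) * t)) := by
      have : Real.exp t = Real.exp (x * t) * Real.exp ((1 - x) * t) := by
        rw [← Real.exp_add]; ring_nf
      rw [this]; ring
    have hD : Real.exp (x * t) * (1 - a) + a =
        Real.exp (x * t) * ((1 - a) + a * Real.exp ((0 - x) * t)) := by
      have : Real.exp ((0 - x) * t) = (Real.exp (x * t))⁻¹ := by
        rw [← Real.exp_neg]; congr 1; ring
      rw [this]
      field_simp
    rw [hN, hD, mul_div_mul_left _ _ (ne_of_gt hE)]

theorem stmt5 (T : ℝ) (hT : 0 < T) :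
    ∀ ε > (0 : ℝ), ∃ δ > (0 : ℝ), ∀ x a : ℝ,
      x ∈ Set.Icc (0 : ℝ) 1 → a ∈ Set.Icc (0 : ℝ) 1 →
      ∀ s ∈ Set.Icc (0 : ℝ) T, ∀ t ∈ Set.Icc (0 : ℝ) T, |s - t| < δ →
        |zfun x a s - zfun x a t| < ε := by
  intro ε hε
  refine ⟨ε, hε, fun x a hx ha s _ t _ hst => ?_⟩
  have key : |zfun x a s - zfun x a t| ≤ |s - t| := by
    have c1 : Continuous fun u : ℝ => psi a ((u - x) * s) :=
      (psi_cont ha).comp (by continuity)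
    have c2 : Continuous fun u : ℝ => psi a ((u - x) * t) :=
      (psi_cont ha).comp (by continuity)
    rw [zrep hx ha s, zrep hx ha t, ← intervalIntegral.integral_sub
      (c1.intervalIntegrable 0 1) (c2.intervalIntegrable 0 1)]
    have hb := intervalIntegral.norm_integral_le_of_norm_le_const
      (f := fun u => psi a ((u - x) * s) - psi a ((u - x) * t)) (C := |s - t|)
      (a := 0) (b := 1) ?_
    · simpa [Real.norm_eq_abs] using hb
    · intro u hu
      rw [Set.uIoc_of_le (by norm_num : (0:ℝ) ≤ 1)] at hu
      have h1 : |psi a ((u - x) * s) - psi a ((u - x) * t)| ≤ |(u - x) * s - (u - x) * t| :=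
        psi_lip ha _ _
      have h2 : |(u - x) * s - (u - x) * t| = |u - x| * |s - t| := by
        rw [← mul_sub, abs_mul]
      have h3 : |u - x| ≤ 1 := by
        rw [abs_le]
        constructor <;> [nlinarith [hu.1.le, hx.2]; nlinarith [hu.2, hx.1]]
      calc ‖psi a ((u - x) * s) - psi a ((u - x) * t)‖
          ≤ |u - x| * |s - t| := by rw [Real.norm_eq_abs]; rw [h2] at h1; exact h1
        _ ≤ 1 * |s - t| := by gcongr
        _ = |s - t| := one_mul _
  linarith
end

section
/- For all real t > 0, all integers n ≥ 1 and all integers 0 ≤ j < i ≤ n, the identity (1/n²)·p_i(j, e^{t/n}) = ((t/n)/(e^{t/n} − 1)) · λ_{i/n}((j+1)/n, t) holds. -/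
theorem stmt7 (t : ℝ) (ht : 0 < t) (n i j : ℕ) (hn : 1 ≤ n) (hj : j < i) (hi : i ≤ n) :
    (1 / (n : ℝ) ^ 2) * pRate i j (Real.exp (t / n)) =
      ((t / n) / (Real.exp (t / n) - 1)) * lam ((i : ℝ) / n) (((j : ℝ) + 1) / n) t := by
  have hn0 : (n : ℝ) ≠ 0 := by
    have : (0:ℝ) < n := by exact_mod_cast hn
    exact ne_of_gt this
  have hnpos : (0:ℝ) < n := by exact_mod_cast hn
  have hs : 0 < t / n := div_pos ht hnpos
  set q := Real.exp (t / n) with hq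
  have hq1 : 1 < q := by
    rw [hq]
    exact Real.one_lt_exp_iff.mpr hs
  have hqne1 : q ≠ 1 := ne_of_gt hq1
  have hq0 : 0 < q := lt_trans one_pos hq1
  have hine : i ≠ 0 := by omega
  have hqi : 1 < q ^ i := one_lt_pow₀ hq1 hine
  have hqim : q ^ i - 1 ≠ 0 := sub_ne_zero.mpr (ne_of_gt hqi)
  have hxne : (i : ℝ) / n ≠ 0 := by
    have : (0:ℝ) < i := by exact_mod_cast Nat.pos_of_ne_zero hine
    positivity
  have htne : t ≠ 0 := ne_of_gt ht
  have h1 : Real.exp (t * ((i:ℝ)/n)) = q ^ i := by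
    rw [hq, show t * ((i:ℝ)/n) = (i:ℕ) * (t/n) by ring, Real.exp_nat_mul]
  have h2 : Real.exp (-t * (((j:ℝ)+1)/n)) = (q ^ (j+1))⁻¹ := by
    rw [hq, show -t * (((j:ℝ)+1)/n) = -(((j+1:ℕ):ℝ) * (t/n)) by push_cast; ring,
      Real.exp_neg, Real.exp_nat_mul]
  have hpow : q ^ (i - j - 1) * q ^ (j + 1) = q ^ i := by
    rw [← pow_add]
    congr 1
    omega
  rw [pRate, lam, if_neg hqne1, if_neg htne, if_neg hxne, h1, h2, ← hpow]
  have hq1' : 1 - q ≠ 0 := sub_ne_zero.mpr hqne1.symm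
  have hqm1 : q - 1 ≠ 0 := sub_ne_zero.mpr hqne1
  have hab : q ^ (i - j - 1) * q ^ (j + 1) - 1 ≠ 0 := by rw [hpow]; exact hqim
  have hbne : q ^ (j+1) ≠ 0 := pow_ne_zero _ (ne_of_gt hq0)
  field_simp
  ring
end

section
/- For all integers 0 ≤ j < i, the limit as t → 1 (t ≠ 1, t > 0) of (1/(1−t))·(j+1 − i·t^{i−j−1}(t^{j+1}−1)/(t^i−1)) equals (1/2)(j+1)(i−j−1); in other words, the function t ↦ p_i(j,t) is continuous at t = 1. -/
open Finset Filter

private lemma sumId (n : ℕ) : ∑ k ∈ Finset.range n, (k : ℝ) = n * (n - 1) / 2 := by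
  induction n with
  | zero => simp
  | succ n ih => rw [Finset.sum_range_succ, ih]; push_cast; ring

/-- auxiliary polynomial -/
noncomputable def Qpol (i j : ℕ) (t : ℝ) : ℝ :=
  ∑ k ∈ Finset.range i,
    (((j : ℝ) + 1) - if i - j - 1 ≤ k then (i : ℝ) else 0) * ∑ m ∈ Finset.range k, t ^ m

private lemma sum_ite_part (i j : ℕ) (hj : j < i) (f : ℕ → ℝ) :
    ∑ k ∈ Finset.range i, (if i - j - 1 ≤ k then (i : ℝ) else 0) * f k
      = (i : ℝ) * ∑ m ∈ Finset.range (j + 1), f (i - j - 1 + m) := by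
  rw [Finset.range_eq_Ico,
    ← Finset.sum_Ico_consecutive _ (Nat.zero_le (i - j - 1)) (show i - j - 1 ≤ i by omega)]
  have h1 : ∑ k ∈ Finset.Ico 0 (i - j - 1), (if i - j - 1 ≤ k then (i : ℝ) else 0) * f k = 0 := by
    apply Finset.sum_eq_zero
    intro k hk
    rw [Finset.mem_Ico] at hk
    rw [if_neg (by omega)]
    ring
  rw [h1, zero_add, Finset.sum_Ico_eq_sum_range]
  have h2 : i - (i - j - 1) = j + 1 := by omega
  rw [h2, Finset.mul_sum]
  refine Finset.sum_congr ?_ ?_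
  · rw [Finset.range_eq_Ico]
  · intro m _
    rw [if_pos (by omega)]

private lemma Qpol_key (i j : ℕ) (hj : j < i) (t : ℝ) :
    (t - 1) * Qpol i j t
      = ((j : ℝ) + 1) * (∑ k ∈ Finset.range i, t ^ k)
        - (i : ℝ) * t ^ (i - j - 1) * (∑ m ∈ Finset.range (j + 1), t ^ m) := by
  have e1 : (t - 1) * Qpol i j t
      = ∑ k ∈ Finset.range i,
          (((j : ℝ) + 1) - if i - j - 1 ≤ k then (i : ℝ) else 0) * (t ^ k - 1) := by
    rw [Qpol, Finset.mul_sum]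
    apply Finset.sum_congr rfl
    intro k _
    rw [← geom_sum_mul t k]
    ring
  rw [e1]
  have expand : ∀ k ∈ Finset.range i,
      (((j : ℝ) + 1) - if i - j - 1 ≤ k then (i : ℝ) else 0) * (t ^ k - 1)
      = ((j : ℝ) + 1) * t ^ k - (if i - j - 1 ≤ k then (i : ℝ) else 0) * t ^ k
        - (((j : ℝ) + 1) - (if i - j - 1 ≤ k then (i : ℝ) else 0) * 1) := by
    intro k _; ring
  rw [Finset.sum_congr rfl expand]
  rw [Finset.sum_sub_distrib, Finset.sum_sub_distrib, Finset.sum_sub_distrib]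
  rw [sum_ite_part i j hj (fun k => t ^ k), sum_ite_part i j hj (fun _ => (1 : ℝ))]
  simp only [Finset.sum_const, Finset.card_range, nsmul_eq_mul, mul_one]
  have : ∑ m ∈ Finset.range (j + 1), t ^ (i - j - 1 + m)
      = t ^ (i - j - 1) * ∑ m ∈ Finset.range (j + 1), t ^ m := by
    rw [Finset.mul_sum]; apply Finset.sum_congr rfl; intro m _; rw [pow_add]
  rw [this, ← Finset.mul_sum]
  push_cast
  ring

private lemma Qpol_one (i j : ℕ) (hj : j < i) :
    Qpol i j 1 = -((i : ℝ) * ((j : ℝ) + 1) * ((i : ℝ) - (j : ℝ) - 1)) / 2 := by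
  have hc : ((i - j - 1 : ℕ) : ℝ) = (i : ℝ) - (j : ℝ) - 1 := by
    have h : i - j - 1 = i - (j + 1) := by omega
    rw [h, Nat.cast_sub hj]
    push_cast
    ring
  rw [Qpol]
  simp only [one_pow, Finset.sum_const, Finset.card_range, nsmul_eq_mul, mul_one]
  have e : ∀ k ∈ Finset.range i, (((j : ℝ) + 1) - if i - j - 1 ≤ k then (i : ℝ) else 0) * (k : ℝ)
      = ((j : ℝ) + 1) * (k : ℝ) - (if i - j - 1 ≤ k then (i : ℝ) else 0) * (k : ℝ) := by
    intro k _; ring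
  rw [Finset.sum_congr rfl e, Finset.sum_sub_distrib, ← Finset.mul_sum,
    sum_ite_part i j hj (fun k => (k : ℝ)), sumId]
  have e2 : ∑ m ∈ Finset.range (j + 1), ((i - j - 1 + m : ℕ) : ℝ)
      = ((j : ℝ) + 1) * ((i : ℝ) - (j : ℝ) - 1) + ((j : ℝ) + 1) * (j : ℝ) / 2 := by
    simp only [Nat.cast_add, hc]
    rw [Finset.sum_add_distrib, Finset.sum_const, Finset.card_range, sumId]
    push_cast
    ring
  rw [e2]
  push_cast
  ring

theorem stmt8 (i j : ℕ) (hj : j < i) :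
    Filter.Tendsto
      (fun t : ℝ => (1 / (1 - t)) *
        (((j : ℝ) + 1) - (i : ℝ) * t ^ (i - j - 1) * (t ^ (j + 1) - 1) / (t ^ i - 1)))
      (nhdsWithin 1 ({1}ᶜ ∩ Set.Ioi 0))
      (nhds ((1 / 2 : ℝ) * ((j : ℝ) + 1) * ((i : ℝ) - (j : ℝ) - 1))) ∧
    ContinuousWithinAt (pRate i j) (Set.Ici 0) 1 := by
  set L : ℝ := (1 / 2 : ℝ) * ((j : ℝ) + 1) * ((i : ℝ) - (j : ℝ) - 1) with hL
  set g : ℝ → ℝ := fun t => -Qpol i j t / (∑ k ∈ Finset.range i, t ^ k) with hg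
  have hQcont : Continuous (fun t => Qpol i j t) := by
    apply continuous_finset_sum
    intro k _
    exact continuous_const.mul (continuous_finset_sum _ fun m _ => continuous_pow m)
  have hScont : Continuous (fun t : ℝ => ∑ k ∈ Finset.range i, t ^ k) :=
    continuous_finset_sum _ fun k _ => continuous_pow k
  have hS1 : (∑ k ∈ Finset.range i, (1 : ℝ) ^ k) = (i : ℝ) := by
    simp
  have hi0 : (i : ℝ) ≠ 0 := Nat.cast_ne_zero.mpr (by omega)
  have hgcont : ContinuousAt g 1 := by
    apply ContinuousAt.div (hQcont.neg.continuousAt) (hScont.continuousAt)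
    rw [hS1]
    exact hi0
  have hg1 : g 1 = L := by
    rw [hg]
    simp only [hS1]
    rw [Qpol_one i j hj]
    field_simp
    ring
  -- equality of f and g away from 1, for t > 0
  have heq : ∀ t : ℝ, 0 < t → t ≠ 1 →
      (1 / (1 - t)) *
        (((j : ℝ) + 1) - (i : ℝ) * t ^ (i - j - 1) * (t ^ (j + 1) - 1) / (t ^ i - 1)) = g t := by
    intro t ht0 ht1
    have hti : t ^ i ≠ 1 := by
      rcases lt_or_gt_of_ne ht1 with h | h
      · exact ne_of_lt (pow_lt_one₀ ht0.le h (by omega))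
      · exact ne_of_gt (one_lt_pow₀ h (by omega))
    have ht1' : t - 1 ≠ 0 := sub_ne_zero.mpr ht1
    have hti' : t ^ i - 1 ≠ 0 := sub_ne_zero.mpr hti
    have hgs : (∑ k ∈ Finset.range i, t ^ k) * (t - 1) = t ^ i - 1 := geom_sum_mul t i
    have hgs2 : (∑ m ∈ Finset.range (j + 1), t ^ m) * (t - 1) = t ^ (j + 1) - 1 :=
      geom_sum_mul t (j + 1)
    have hSne : (∑ k ∈ Finset.range i, t ^ k) ≠ 0 := by
      intro h
      rw [h, zero_mul] at hgs
      exact hti' hgs.symm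
    have hkey := Qpol_key i j hj t
    rw [hg]
    have h1t : (1 : ℝ) - t ≠ 0 := fun h => ht1' (by linarith [sub_eq_zero.mp h])
    field_simp
    linear_combination (-(((j : ℝ) + 1)) * (∑ k ∈ Finset.range i, t ^ k) + (t - 1) * Qpol i j t) * hgs
      + ((i : ℝ) * t ^ (i - j - 1) * (∑ k ∈ Finset.range i, t ^ k)) * hgs2
      - ((∑ k ∈ Finset.range i, t ^ k) * (t - 1)) * hkey
  constructor
  · have hgl : Filter.Tendsto g (nhdsWithin 1 ({1}ᶜ ∩ Set.Ioi 0)) (nhds L) := by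
      rw [← hg1]
      exact hgcont.continuousWithinAt.tendsto
    apply hgl.congr'
    filter_upwards [self_mem_nhdsWithin] with t ht
    exact (heq t ht.2 ht.1).symm
  · have hL' : pRate i j 1 = L := by rw [pRate, if_pos rfl]
    rw [ContinuousWithinAt, hL']
    have hgl : Filter.Tendsto g (nhdsWithin 1 (Set.Ici 0)) (nhds L) := by
      rw [← hg1]
      exact hgcont.continuousWithinAt.tendsto
    apply hgl.congr'
    have hpos : ∀ᶠ t in nhdsWithin (1 : ℝ) (Set.Ici 0), 0 < t :=
      eventually_nhdsWithin_of_eventually_nhds (Filter.Tendsto.eventually_const_lt (by norm_num) Filter.tendsto_id)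
    filter_upwards [hpos] with t ht
    rw [pRate]
    by_cases h : t = 1
    · rw [if_pos h, h, hg1]
    · rw [if_neg h, heq t ht h]
end

section
/- For every t > 0 and all x, a ∈ [0,1], letting F_x(z) = (1/t)·log( e^{xt}(e^t − 1) / (e^{(x+z)t} − e^{xt} − e^{zt} + e^t) ), one has the identity F_x(z_{x,a}(t)) = (1/t)·log(a + (1−a)·e^{tx}). -/
theorem stmt10 (t : ℝ) (ht : 0 < t) (x a : ℝ)
    (hx : x ∈ Set.Icc (0 : ℝ) 1) (ha : a ∈ Set.Icc (0 : ℝ) 1)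
    (F : ℝ → ℝ)
    (hF : ∀ z : ℝ, F z = (1 / t) * Real.log (Real.exp (x * t) * (Real.exp t - 1) /
      (Real.exp ((x + z) * t) - Real.exp (x * t) - Real.exp (z * t) + Real.exp t))) :
    F (zfun x a t) = (1 / t) * Real.log (a + (1 - a) * Real.exp (t * x)) := by
  obtain ⟨ha0, ha1⟩ := ha
  have ht' : t ≠ 0 := ht.ne'
  set E := Real.exp (x * t) with hE
  have hEpos : 0 < E := Real.exp_pos _
  have het : 1 < Real.exp t := by
    have := Real.exp_lt_exp.mpr ht
    simpa using this
  have hD : 0 < E * (1 - a) + a := by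
    rcases eq_or_lt_of_le ha1 with h | h
    · rw [h]; norm_num
    · have := mul_pos hEpos (by linarith : (0:ℝ) < 1 - a)
      linarith
  have hN : 0 < E * (1 - a) + a * Real.exp t := by
    rcases eq_or_lt_of_le ha1 with h | h
    · rw [h]; norm_num; positivity
    · have h1 := mul_pos hEpos (by linarith : (0:ℝ) < 1 - a)
      have h2 : 0 ≤ a * Real.exp t := by positivity
      linarith
  have hz : zfun x a t = (1 / t) * Real.log ((E * (1 - a) + a * Real.exp t) /
      (E * (1 - a) + a)) := by
    simp [zfun, ht']
    rfl
  have hexpz : Real.exp (zfun x a t * t) =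
      (E * (1 - a) + a * Real.exp t) / (E * (1 - a) + a) := by
    rw [hz]
    have : 1 / t * Real.log ((E * (1 - a) + a * Real.exp t) / (E * (1 - a) + a)) * t =
        Real.log ((E * (1 - a) + a * Real.exp t) / (E * (1 - a) + a)) := by
      field_simp
    rw [this, Real.exp_log (div_pos hN hD)]
  have key : Real.exp ((x + zfun x a t) * t) - E - Real.exp (zfun x a t * t) + Real.exp t
      = E * (Real.exp t - 1) / (E * (1 - a) + a) := by
    have hsplit : Real.exp ((x + zfun x a t) * t) = E * Real.exp (zfun x a t * t) := by
      rw [add_mul, Real.exp_add]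
    rw [hsplit, hexpz]
    field_simp
    ring
  rw [hF, key]
  have hA : E * (Real.exp t - 1) ≠ 0 := ne_of_gt (mul_pos hEpos (by linarith))
  rw [div_div_eq_mul_div, mul_comm (E * (Real.exp t - 1)) (E * (1 - a) + a),
    mul_div_assoc, div_self hA, mul_one]
  congr 1
  rw [mul_comm t x]
  rw [hE]
  ring
end

section
/- Let n ∈ ℕ and 0 ≤ β′ ≤ β be real numbers. Then for every subset B ⊆ S_n, writing π_{n,e^{β/n}} and π_{n,e^{β′/n}} for the Mallows distributions with parameters e^{β/n} and e^{β′/n} respectively, one has π_{n,e^{β/n}}(B) ≤ e^{(β−β′)(n−1)/2} · π_{n,e^{β′/n}}(B). -/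
/-- Number of inversions of a permutation of `Fin n`. -/
noncomputable def mallowsInv {n : ℕ} (σ : Equiv.Perm (Fin n)) : ℕ :=
  (Finset.univ.filter fun p : Fin n × Fin n => p.1 < p.2 ∧ σ p.2 < σ p.1).card

/-- Normalizing constant `Z_{n,q} = ∏_{i=1}^n (1 + q + ⋯ + q^{i-1})`. -/
noncomputable def mallowsZ (n : ℕ) (q : ℝ) : ℝ :=
  ∏ i ∈ Finset.range n, ∑ k ∈ Finset.range (i + 1), q ^ k

/-- Probability of a set `A` of permutations under the Mallows distribution `π_{n,q}`. -/
noncomputable def mallowsProb (n : ℕ) (q : ℝ) (A : Set (Equiv.Perm (Fin n))) : ℝ :=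
  ∑ σ : Equiv.Perm (Fin n), A.indicator (fun σ => q ^ mallowsInv σ / mallowsZ n q) σ

lemma two_mul_mallowsInv_le {n : ℕ} (σ : Equiv.Perm (Fin n)) :
    2 * mallowsInv σ ≤ n * n - n := by
  classical
  set A := Finset.univ.filter fun p : Fin n × Fin n => p.1 < p.2 with hA
  set C := Finset.univ.filter fun p : Fin n × Fin n => p.2 < p.1 with hC
  have h1 : mallowsInv σ ≤ A.card := by
    apply Finset.card_le_card
    intro p hp
    simp only [hA, Finset.mem_filter, Finset.mem_univ, true_and] at hp ⊢
    exact hp.1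
  have hAC : A.card = C.card := by
    have : C = A.image Prod.swap := by
      ext p
      simp [hA, hC, Finset.mem_image, Prod.ext_iff]
    rw [this, Finset.card_image_of_injective _ Prod.swap_injective]
  have hdisj : Disjoint A C := by
    rw [Finset.disjoint_left]
    intro p hp hp'
    simp only [hA, hC, Finset.mem_filter] at hp hp'
    exact absurd hp'.2 (lt_asymm hp.2)
  have hsub : A ∪ C ⊆ Finset.univ.offDiag := by
    intro p hp
    rcases Finset.mem_union.mp hp with h | h <;>
      simp only [hA, hC, Finset.mem_filter, Finset.mem_univ, true_and] at h <;>
      simp [Finset.mem_offDiag]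
    · exact ne_of_lt h
    · exact ne_of_gt h
  have hcard : A.card + C.card ≤ n * n - n := by
    calc A.card + C.card = (A ∪ C).card := (Finset.card_union_of_disjoint hdisj).symm
    _ ≤ (Finset.univ.offDiag : Finset (Fin n × Fin n)).card := Finset.card_le_card hsub
    _ = n * n - n := by
        rw [Finset.offDiag_card]
        simp
  omega

theorem stmt12 (n : ℕ) (hn : 1 ≤ n) (β β' : ℝ) (h0 : 0 ≤ β') (h1 : β' ≤ β)
    (B : Set (Equiv.Perm (Fin n))) :
    mallowsProb n (Real.exp (β / n)) B ≤
      Real.exp ((β - β') * ((n : ℝ) - 1) / 2) * mallowsProb n (Real.exp (β' / n)) B := by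
  classical
  set q := Real.exp (β / n) with hq
  set q' := Real.exp (β' / n) with hq'
  have hnpos : (0 : ℝ) < n := by exact_mod_cast hn
  have hq'1 : (1 : ℝ) ≤ q' := Real.one_le_exp (by positivity)
  have hq'pos : (0 : ℝ) < q' := lt_of_lt_of_le one_pos hq'1
  have hqq' : q' ≤ q := Real.exp_le_exp.mpr (by gcongr)
  have hZpos : ∀ r : ℝ, 0 < r → 0 < mallowsZ n r := by
    intro r hr
    apply Finset.prod_pos
    intro i _
    apply Finset.sum_pos
    · intro k _; positivity
    · exact ⟨0, Finset.mem_range.mpr (Nat.succ_pos i)⟩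
  have hZmono : mallowsZ n q' ≤ mallowsZ n q := by
    apply Finset.prod_le_prod
    · intro i _
      apply Finset.sum_nonneg
      intro k _; positivity
    · intro i _
      apply Finset.sum_le_sum
      intro k _
      exact pow_le_pow_left₀ (le_of_lt hq'pos) hqq' k
  set c := Real.exp ((β - β') * ((n : ℝ) - 1) / 2) with hc
  unfold mallowsProb
  rw [Finset.mul_sum]
  apply Finset.sum_le_sum
  intro σ _
  by_cases hσ : σ ∈ B
  · rw [Set.indicator_of_mem hσ, Set.indicator_of_mem hσ]
    have hnum : q ^ mallowsInv σ ≤ c * q' ^ mallowsInv σ := by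
      rw [hq, hq', hc, ← Real.exp_nat_mul, ← Real.exp_nat_mul, ← Real.exp_add]
      apply Real.exp_le_exp.mpr
      have hI : (2 * mallowsInv σ : ℝ) ≤ n * n - n := by
        have := two_mul_mallowsInv_le σ
        have h2 : (2 * mallowsInv σ : ℕ) ≤ n * n - n := this
        have : ((2 * mallowsInv σ : ℕ) : ℝ) ≤ ((n * n - n : ℕ) : ℝ) := by exact_mod_cast h2
        push_cast [Nat.cast_sub (Nat.le_mul_of_pos_left n hn)] at this
        linarith
      have hIn : (mallowsInv σ : ℝ) / n ≤ ((n : ℝ) - 1) / 2 := by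
        rw [div_le_div_iff₀ hnpos (by norm_num)]
        nlinarith
      have hβ : (0 : ℝ) ≤ β - β' := by linarith
      have : (mallowsInv σ : ℝ) * (β / n) - (mallowsInv σ : ℝ) * (β' / n)
          = (β - β') * ((mallowsInv σ : ℝ) / n) := by ring
      nlinarith [mul_le_mul_of_nonneg_left hIn hβ]
    calc q ^ mallowsInv σ / mallowsZ n q ≤ (c * q' ^ mallowsInv σ) / mallowsZ n q' := by
          apply div_le_div₀ (by positivity) hnum (hZpos q' hq'pos) hZmono
    _ = c * (q' ^ mallowsInv σ / mallowsZ n q') := by ring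
  · rw [Set.indicator_of_notMem hσ, Set.indicator_of_notMem hσ]
    simp
end

section
/- Let n ∈ ℕ, q > 0 and let σ be a random permutation distributed according to the Mallows distribution π_{n,q}. Then the left inversion counts ℓ_1(σ), …, ℓ_n(σ), where ℓ_i(σ) = |{j < i : σ(j) > σ(i)}|, are mutually independent random variables, and for each i ∈ [n] the distribution of ℓ_i(σ) is the truncated geometric distribution ℙ(ℓ_i(σ) = j) = q^j / (1 + q + ⋯ + q^{i−1}) for j = 0, 1, …, i−1. -/
open MeasureTheory
open scoped ENNReal Classical

instance (n : ℕ) : MeasurableSpace (Equiv.Perm (Fin n)) := ⊤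

/-- The Mallows distribution `π_{n,q}` as a measure on the symmetric group. -/
noncomputable def mallowsMeasure (n : ℕ) (q : ℝ) : Measure (Equiv.Perm (Fin n)) :=
  ∑ σ : Equiv.Perm (Fin n),
    (ENNReal.ofReal (q ^ mallowsInv σ / mallowsZ n q)) • Measure.dirac σ

/-- Number of left inversions of element `i`: `ℓ_i(σ) = |{j < i : σ(j) > σ(i)}|`. -/
noncomputable def ellFin {n : ℕ} (σ : Equiv.Perm (Fin n)) (i : Fin n) : ℕ :=
  (Finset.univ.filter fun j : Fin n => j < i ∧ σ i < σ j).card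

namespace MallowsAux

open Finset

variable {n : ℕ}

lemma ellFin_le (σ : Equiv.Perm (Fin n)) (i : Fin n) : ellFin σ i ≤ (i : ℕ) := by
  classical
  calc ellFin σ i ≤ (Finset.univ.filter fun j : Fin n => j < i).card := by
        apply Finset.card_le_card
        intro j hj
        simp only [Finset.mem_filter] at hj ⊢
        exact ⟨hj.1, hj.2.1⟩
    _ = (i : ℕ) := by
        rw [show (Finset.univ.filter fun j : Fin n => j < i) = Finset.Iio i by
          ext j; simp [Finset.mem_Iio]]
        exact Fin.card_Iio i

lemma mallowsInv_eq_sum (σ : Equiv.Perm (Fin n)) : mallowsInv σ = ∑ i, ellFin σ i := by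
  classical
  unfold mallowsInv ellFin
  rw [Finset.card_filter, Fintype.sum_prod_type_right]
  exact Finset.sum_congr rfl fun i _ => (Finset.card_filter _ _).symm

/-- The Lehmer code of a permutation. -/
noncomputable def code (σ : Equiv.Perm (Fin n)) : ∀ i : Fin n, Fin ((i : ℕ) + 1) :=
  fun i => ⟨ellFin σ i, Nat.lt_succ_of_le (ellFin_le σ i)⟩

/-- Delete the last position of a permutation of `Fin (n+1)`. -/
noncomputable def delPerm (σ : Equiv.Perm (Fin (n + 1))) : Equiv.Perm (Fin n) :=
  Equiv.removeNone
    ((finSuccEquiv' (Fin.last n)).symm.trans (σ.trans (finSuccEquiv' (σ (Fin.last n)))))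

lemma succAbove_delPerm (σ : Equiv.Perm (Fin (n + 1))) (i : Fin n) :
    (σ (Fin.last n)).succAbove (delPerm σ i) = σ i.castSucc := by
  have hne : σ i.castSucc ≠ σ (Fin.last n) :=
    σ.injective.ne (Fin.ne_of_lt (Fin.castSucc_lt_last i))
  obtain ⟨j, hj⟩ := Fin.exists_succAbove_eq hne
  set e := (finSuccEquiv' (Fin.last n)).symm.trans (σ.trans (finSuccEquiv' (σ (Fin.last n))))
    with he_def
  have he : e (some i) = some j := by
    simp only [he_def, Equiv.trans_apply, finSuccEquiv'_symm_some, Fin.succAbove_last_apply]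
    rw [← hj, finSuccEquiv'_succAbove]
  have h2 := Equiv.removeNone_some e ⟨j, he⟩
  rw [he] at h2
  have h3 : delPerm σ i = j := Option.some_injective _ h2
  rw [h3, hj]

lemma delPerm_lt_iff (σ : Equiv.Perm (Fin (n + 1))) (i j : Fin n) :
    delPerm σ i < delPerm σ j ↔ σ i.castSucc < σ j.castSucc := by
  rw [← succAbove_delPerm σ i, ← succAbove_delPerm σ j, Fin.succAbove_lt_succAbove_iff]

lemma ellFin_delPerm (σ : Equiv.Perm (Fin (n + 1))) (i : Fin n) :
    ellFin (delPerm σ) i = ellFin σ i.castSucc := by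
  classical
  unfold ellFin
  apply Finset.card_bij (fun j _ => Fin.castSucc j)
  · intro j hj
    simp only [Finset.mem_filter, Finset.mem_univ, true_and] at hj ⊢
    exact ⟨Fin.castSucc_lt_castSucc_iff.2 hj.1, (delPerm_lt_iff σ i j).1 hj.2⟩
  · intro a _ b _ h
    exact Fin.castSucc_injective n h
  · intro j' hj'
    simp only [Finset.mem_filter, Finset.mem_univ, true_and] at hj'
    have hne : j' ≠ Fin.last n :=
      Fin.ne_of_lt (lt_of_lt_of_le hj'.1 (Fin.le_last _))
    obtain ⟨j, rfl⟩ := Fin.exists_castSucc_eq.2 hne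
    refine ⟨j, ?_, rfl⟩
    simp only [Finset.mem_filter, Finset.mem_univ, true_and]
    exact ⟨Fin.castSucc_lt_castSucc_iff.1 hj'.1, (delPerm_lt_iff σ i j).2 hj'.2⟩

lemma ellFin_last (σ : Equiv.Perm (Fin (n + 1))) :
    ellFin σ (Fin.last n) = n - (σ (Fin.last n) : ℕ) := by
  classical
  unfold ellFin
  have h1 : (Finset.univ.filter fun j : Fin (n+1) =>
      j < Fin.last n ∧ σ (Fin.last n) < σ j) =
      Finset.univ.filter fun j : Fin (n+1) => σ (Fin.last n) < σ j := by
    ext j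
    simp only [Finset.mem_filter, Finset.mem_univ, true_and, and_iff_right_iff_imp]
    intro h
    rw [Fin.lt_last_iff_ne_last]
    intro hh
    subst hh
    exact lt_irrefl _ h
  rw [h1]
  have h2 : (Finset.univ.filter fun j : Fin (n+1) => σ (Fin.last n) < σ j).card =
      (Finset.Ioi (σ (Fin.last n))).card := by
    apply Finset.card_bij (fun j _ => σ j)
    · intro j hj
      simp only [Finset.mem_filter, Finset.mem_univ, true_and] at hj
      exact Finset.mem_Ioi.2 hj
    · intro a _ b _ h
      exact σ.injective h
    · intro y hy
      refine ⟨σ.symm y, ?_, by simp⟩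
      simp only [Finset.mem_filter, Finset.mem_univ, true_and, Equiv.apply_symm_apply]
      exact Finset.mem_Ioi.1 hy
  rw [h2, Fin.card_Ioi]
  omega

lemma code_inj : ∀ {n : ℕ} (σ τ : Equiv.Perm (Fin n)),
    (∀ i, ellFin σ i = ellFin τ i) → σ = τ := by
  intro n
  induction n with
  | zero => intro σ τ _; exact Subsingleton.elim σ τ
  | succ n ih =>
    intro σ τ h
    have hlast : σ (Fin.last n) = τ (Fin.last n) := by
      have h1 := h (Fin.last n)
      rw [ellFin_last, ellFin_last] at h1
      have h2 : (σ (Fin.last n) : ℕ) ≤ n := Fin.is_le _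
      have h3 : (τ (Fin.last n) : ℕ) ≤ n := Fin.is_le _
      exact Fin.ext (by omega)
    have hdel : delPerm σ = delPerm τ := by
      apply ih
      intro i
      rw [ellFin_delPerm, ellFin_delPerm, h]
    apply Equiv.ext
    intro i
    induction i using Fin.lastCases with
    | last => exact hlast
    | cast j =>
      rw [← succAbove_delPerm σ j, ← succAbove_delPerm τ j, hlast, hdel]

lemma prod_range_succ_factorial : ∀ m : ℕ, ∏ i ∈ Finset.range m, (i + 1) = m.factorial := by
  intro m
  induction m with
  | zero => simp
  | succ m ih => rw [Finset.prod_range_succ, ih, Nat.factorial_succ, mul_comm]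

lemma code_bijective : Function.Bijective (code (n := n)) := by
  rw [Fintype.bijective_iff_injective_and_card]
  constructor
  · intro σ τ h
    apply code_inj
    intro i
    exact congrArg Fin.val (congrFun h i)
  · rw [Fintype.card_perm, Fintype.card_pi]
    simp only [Fintype.card_fin]
    rw [Fin.prod_univ_eq_prod_range (fun i => i + 1) n, prod_range_succ_factorial]

lemma sum_code (F : ∀ i : Fin n, Fin ((i : ℕ) + 1) → ℝ≥0∞) :
    ∑ σ : Equiv.Perm (Fin n), ∏ i, F i (code σ i) = ∏ i, ∑ j, F i j := by
  classical
  rw [Fintype.prod_sum]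
  exact Fintype.sum_bijective code code_bijective _ _ (fun σ => rfl)

lemma prod_ite_all {c : Fin n → Prop} [DecidablePred c] (f : Fin n → ℝ≥0∞) :
    ∏ i, (if c i then f i else 0) = if ∀ i, c i then ∏ i, f i else 0 := by
  by_cases h : ∀ i, c i
  · rw [if_pos h]
    exact Finset.prod_congr rfl fun i _ => if_pos (h i)
  · rw [if_neg h]
    push_neg at h
    obtain ⟨i, hi⟩ := h
    exact Finset.prod_eq_zero (Finset.mem_univ i) (if_neg hi)

variable {q : ℝ}

lemma S_pos (hq : 0 < q) (m : ℕ) : 0 < ∑ k ∈ Finset.range (m + 1), q ^ k :=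
  Finset.sum_pos (fun k _ => pow_pos hq k) (Finset.nonempty_range_add_one)

lemma measure_apply (A : Set (Equiv.Perm (Fin n))) :
    mallowsMeasure n q A = ∑ σ : Equiv.Perm (Fin n),
      Set.indicator A (fun σ => ENNReal.ofReal (q ^ mallowsInv σ / mallowsZ n q)) σ := by
  classical
  unfold mallowsMeasure
  rw [Measure.finset_sum_apply]
  refine Finset.sum_congr rfl fun σ _ => ?_
  rw [Measure.smul_apply, Measure.dirac_apply' _ MeasurableSpace.measurableSet_top]
  by_cases h : σ ∈ A <;> simp [h, Set.indicator_of_mem, Set.indicator_of_notMem]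

lemma w_eq (hq : 0 < q) (σ : Equiv.Perm (Fin n)) :
    ENNReal.ofReal (q ^ mallowsInv σ / mallowsZ n q) =
      ∏ i : Fin n, ENNReal.ofReal (q ^ ellFin σ i / ∑ k ∈ Finset.range ((i : ℕ) + 1), q ^ k) := by
  rw [← ENNReal.ofReal_prod_of_nonneg (fun i _ =>
    div_nonneg (pow_nonneg hq.le _) (S_pos hq _).le)]
  congr 1
  rw [Finset.prod_div_distrib]
  congr 1
  · rw [mallowsInv_eq_sum, ← Finset.prod_pow_eq_pow_sum]
  · unfold mallowsZ
    exact (Fin.prod_univ_eq_prod_range _ n).symm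

lemma sum_p (hq : 0 < q) (i : Fin n) :
    ∑ j : Fin ((i : ℕ) + 1),
      ENNReal.ofReal (q ^ (j : ℕ) / ∑ k ∈ Finset.range ((i : ℕ) + 1), q ^ k) = 1 := by
  rw [← ENNReal.ofReal_sum_of_nonneg (fun j _ =>
    div_nonneg (pow_nonneg hq.le _) (S_pos hq _).le)]
  have h1 : ∑ j : Fin ((i : ℕ) + 1),
      q ^ (j : ℕ) / ∑ k ∈ Finset.range ((i : ℕ) + 1), q ^ k = 1 := by
    rw [← Finset.sum_div, Fin.sum_univ_eq_sum_range (fun j => q ^ j)]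
    exact div_self (S_pos hq _).ne'
  rw [h1, ENNReal.ofReal_one]

lemma measure_event (hq : 0 < q) (s : Finset (Fin n)) (B : Fin n → Set ℕ) :
    mallowsMeasure n q {σ | ∀ i ∈ s, ellFin σ i ∈ B i} =
      ∏ i ∈ s, ∑ j : Fin ((i : ℕ) + 1),
        (if (j : ℕ) ∈ B i then
          ENNReal.ofReal (q ^ (j : ℕ) / ∑ k ∈ Finset.range ((i : ℕ) + 1), q ^ k) else 0) := by
  classical
  have F : ∀ i : Fin n, Fin ((i : ℕ) + 1) → ℝ≥0∞ := fun i j =>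
    if i ∈ s → (j : ℕ) ∈ B i then
      ENNReal.ofReal (q ^ (j : ℕ) / ∑ k ∈ Finset.range ((i : ℕ) + 1), q ^ k) else 0
  rw [measure_apply]
  have hstep : ∀ σ : Equiv.Perm (Fin n),
      Set.indicator {σ : Equiv.Perm (Fin n) | ∀ i ∈ s, ellFin σ i ∈ B i}
        (fun σ => ENNReal.ofReal (q ^ mallowsInv σ / mallowsZ n q)) σ =
      ∏ i : Fin n, (if i ∈ s → ((code σ i : ℕ) ∈ B i) then
        ENNReal.ofReal (q ^ (code σ i : ℕ) / ∑ k ∈ Finset.range ((i : ℕ) + 1), q ^ k)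
        else 0) := by
    intro σ
    rw [prod_ite_all (c := fun i => i ∈ s → ((code σ i : ℕ) ∈ B i))
      (f := fun i => ENNReal.ofReal
        (q ^ (code σ i : ℕ) / ∑ k ∈ Finset.range ((i : ℕ) + 1), q ^ k))]
    have hmem : σ ∈ {σ : Equiv.Perm (Fin n) | ∀ i ∈ s, ellFin σ i ∈ B i} ↔
        ∀ i, i ∈ s → ((code σ i : ℕ) ∈ B i) := Iff.rfl
    by_cases h : ∀ i, i ∈ s → ((code σ i : ℕ) ∈ B i)
    · rw [if_pos h, Set.indicator_of_mem (hmem.2 h), w_eq hq]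
      rfl
    · rw [if_neg h, Set.indicator_of_notMem (fun hh => h (hmem.1 hh))]
  refine (Finset.sum_congr rfl fun σ _ => hstep σ).trans ?_
  rw [sum_code (fun i j =>
    if i ∈ s → (j : ℕ) ∈ B i then
      ENNReal.ofReal (q ^ (j : ℕ) / ∑ k ∈ Finset.range ((i : ℕ) + 1), q ^ k) else 0)]
  have hfac : ∀ i : Fin n, (∑ j : Fin ((i : ℕ) + 1),
      if i ∈ s → (j : ℕ) ∈ B i then
        ENNReal.ofReal (q ^ (j : ℕ) / ∑ k ∈ Finset.range ((i : ℕ) + 1), q ^ k) else 0) =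
      (if i ∈ s then ∑ j : Fin ((i : ℕ) + 1),
        (if (j : ℕ) ∈ B i then
          ENNReal.ofReal (q ^ (j : ℕ) / ∑ k ∈ Finset.range ((i : ℕ) + 1), q ^ k) else 0)
        else 1) := by
    intro i
    by_cases hi : i ∈ s
    · rw [if_pos hi]
      refine Finset.sum_congr rfl fun j _ => ?_
      simp [hi]
    · rw [if_neg hi]
      have h2 : ∀ j : Fin ((i : ℕ) + 1),
          (if i ∈ s → (j : ℕ) ∈ B i then
            ENNReal.ofReal (q ^ (j : ℕ) / ∑ k ∈ Finset.range ((i : ℕ) + 1), q ^ k) else 0) =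
          ENNReal.ofReal (q ^ (j : ℕ) / ∑ k ∈ Finset.range ((i : ℕ) + 1), q ^ k) := by
        intro j; rw [if_pos (fun hh => absurd hh hi)]
      rw [Finset.sum_congr rfl fun j _ => h2 j, sum_p hq]
  rw [Finset.prod_congr rfl fun i _ => hfac i, Finset.prod_ite_mem]
  rw [Finset.univ_inter]

end MallowsAux

theorem stmt15 (n : ℕ) (q : ℝ) (hq : 0 < q) :
    ProbabilityTheory.iIndepFun (m := fun _ : Fin n => (inferInstance : MeasurableSpace ℕ))
      (fun i σ => ellFin σ i) (mallowsMeasure n q) ∧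
    ∀ i : Fin n, ∀ j : ℕ, j ≤ (i : ℕ) →
      mallowsMeasure n q {σ | ellFin σ i = j} =
        ENNReal.ofReal (q ^ j / ∑ k ∈ Finset.range ((i : ℕ) + 1), q ^ k) := by
  classical
  have hsingle : ∀ (i : Fin n) (B : Set ℕ),
      mallowsMeasure n q {σ | ellFin σ i ∈ B} =
        ∑ j : Fin ((i : ℕ) + 1),
          (if (j : ℕ) ∈ B then
            ENNReal.ofReal (q ^ (j : ℕ) / ∑ k ∈ Finset.range ((i : ℕ) + 1), q ^ k) else 0) := by
    intro i B
    have h := MallowsAux.measure_event hq {i} (fun _ => B)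
    rw [Finset.prod_singleton] at h
    rw [← h]
    congr 1
    ext σ
    simp
  constructor
  · rw [ProbabilityTheory.iIndepFun_iff_measure_inter_preimage_eq_mul]
    intro S sets _
    have hset : (⋂ i ∈ S, (fun σ : Equiv.Perm (Fin n) => ellFin σ i) ⁻¹' sets i) =
        {σ : Equiv.Perm (Fin n) | ∀ i ∈ S, ellFin σ i ∈ sets i} := by
      ext σ
      simp
    rw [hset, MallowsAux.measure_event hq S sets]
    refine (Finset.prod_congr rfl fun i _ => ?_).symm
    have : (fun σ : Equiv.Perm (Fin n) => ellFin σ i) ⁻¹' sets i =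
        {σ : Equiv.Perm (Fin n) | ellFin σ i ∈ sets i} := rfl
    rw [this, hsingle i (sets i)]
  · intro i j hj
    have h := hsingle i {j}
    have hset : {σ : Equiv.Perm (Fin n) | ellFin σ i ∈ ({j} : Set ℕ)} =
        {σ : Equiv.Perm (Fin n) | ellFin σ i = j} := by
      ext σ; simp
    rw [hset] at h
    rw [h]
    rw [Finset.sum_eq_single (⟨j, Nat.lt_succ_of_le hj⟩ : Fin ((i : ℕ) + 1))]
    · simp
    · intro b _ hb
      rw [if_neg]
      simp only [Set.mem_singleton_iff]
      intro hbj
      exact hb (Fin.ext hbj)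
    · intro h'
      exact absurd (Finset.mem_univ _) h'
end

section
/- Let σ be a balanced permutation of ℤ with left inversion counts ℓ_i = ℓ_i(σ) and right inversion counts r_i = r_i(σ). For i ∈ ℤ define ℓ_i^{(i)} = ℓ_i and recursively ℓ_i^{(j+1)} = ℓ_i^{(j)} + 1_{{ℓ_i^{(j)} ≥ ℓ_{j+1}}} for j ≥ i. Then for every i ∈ ℤ, r_i = Σ_{j > i} 1_{{ℓ_i^{(j)} < ℓ_j}} = Σ_{j > i} 1_{{ℓ_i^{(j−1)} = ℓ_i^{(j)}}}. -/
/-- A permutation of `ℤ` is balanced if `|{i ≤ 0 : σ(i) ≥ 1}| = |{i ≥ 1 : σ(i) ≤ 0}| < ∞`. -/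
def IsBalanced (σ : Equiv.Perm ℤ) : Prop :=
  {i : ℤ | i ≤ 0 ∧ 1 ≤ σ i}.Finite ∧ {i : ℤ | 1 ≤ i ∧ σ i ≤ 0}.Finite ∧
    {i : ℤ | i ≤ 0 ∧ 1 ≤ σ i}.ncard = {i : ℤ | 1 ≤ i ∧ σ i ≤ 0}.ncard

/-- Left inversion count `ℓ_i(σ) = |{j < i : σ(j) > σ(i)}|`. -/
noncomputable def linv (σ : Equiv.Perm ℤ) (i : ℤ) : ℕ :=
  {j : ℤ | j < i ∧ σ i < σ j}.ncard

/-- Right inversion count `r_i(σ) = |{j > i : σ(j) < σ(i)}|`. -/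
noncomputable def rinv (σ : Equiv.Perm ℤ) (i : ℤ) : ℕ :=
  {j : ℤ | i < j ∧ σ j < σ i}.ncard

/-- Given a sequence `ℓ : ℤ → ℕ` and `i : ℤ`, `iterL ℓ i k` is the quantity
`ℓ_i^{(i+k)}` defined by the recursion `ℓ_i^{(i)} = ℓ_i`,
`ℓ_i^{(j+1)} = ℓ_i^{(j)} + 1_{ℓ_i^{(j)} ≥ ℓ_{j+1}}`. -/
def iterL (ℓ : ℤ → ℕ) (i : ℤ) : ℕ → ℕ
  | 0 => ℓ i
  | k + 1 => iterL ℓ i k + if ℓ (i + (k : ℤ) + 1) ≤ iterL ℓ i k then 1 else 0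


/-- key finiteness: only finitely many positions `≤ j` carry values `> m`. -/
lemma finAbove (σ : Equiv.Perm ℤ) (hσ : IsBalanced σ) (j m : ℤ) :
    {k : ℤ | k ≤ j ∧ m < σ k}.Finite := by
  have h1 : {i : ℤ | i ≤ 0 ∧ 1 ≤ σ i}.Finite := hσ.1
  have h2 : (Set.Ioc (0:ℤ) j).Finite := Set.finite_Ioc 0 j
  have h3 : ((fun v => σ.symm v) '' Set.Ioc m 0).Finite := (Set.finite_Ioc m 0).image _
  refine ((h1.union h2).union h3).subset ?_
  rintro k ⟨hk, hm⟩
  by_cases hv : σ k ≤ 0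
  · right
    exact ⟨σ k, ⟨hm, hv⟩, σ.symm_apply_apply k⟩
  · left
    push_neg at hv
    rcases le_or_gt k 0 with h | h
    · exact Or.inl ⟨h, hv⟩
    · exact Or.inr ⟨h, hk⟩

def Aset (σ : Equiv.Perm ℤ) (i j : ℤ) : Set ℤ := {t : ℤ | t ≤ j ∧ t ≠ i ∧ σ i < σ t}

lemma Aset_finite (σ : Equiv.Perm ℤ) (hσ : IsBalanced σ) (i j : ℤ) : (Aset σ i j).Finite :=
  (finAbove σ hσ j (σ i)).subset (fun t ht => ⟨ht.1, ht.2.2⟩)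

lemma linvset_finite (σ : Equiv.Perm ℤ) (hσ : IsBalanced σ) (j : ℤ) :
    {t : ℤ | t < j ∧ σ j < σ t}.Finite :=
  (finAbove σ hσ j (σ j)).subset (fun t ht => ⟨le_of_lt ht.1, ht.2⟩)

/-- comparison lemma -/
lemma compare (σ : Equiv.Perm ℤ) (hσ : IsBalanced σ) {i j : ℤ} (hij : i < j) :
    (linv σ j ≤ (Aset σ i (j-1)).ncard) ↔ σ i < σ j := by
  have hne : σ j ≠ σ i := fun h => (ne_of_gt hij) (σ.injective h)
  rcases lt_or_gt_of_ne hne with h | h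
  · -- σ j < σ i : show ¬ (ℓ_j ≤ ncard A), i.e. ncard A < ℓ_j
    have hsub : insert i (Aset σ i (j-1)) ⊆ {t : ℤ | t < j ∧ σ j < σ t} := by
      rintro t (rfl | ⟨ht1, _, ht3⟩)
      · exact ⟨hij, h⟩
      · exact ⟨by omega, lt_trans h ht3⟩
    have hlt : (Aset σ i (j-1)).ncard < linv σ j := by
      have h1 : (insert i (Aset σ i (j-1))).ncard ≤ linv σ j :=
        Set.ncard_le_ncard hsub (linvset_finite σ hσ j)
      have h2 : (insert i (Aset σ i (j-1))).ncard = (Aset σ i (j-1)).ncard + 1 :=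
        Set.ncard_insert_of_notMem (fun ht => ht.2.1 rfl) (Aset_finite σ hσ i (j-1))
      omega
    constructor
    · intro hh; omega
    · intro hh; exact absurd hh (not_lt_of_gt h)
  · -- σ i < σ j : show ℓ_j ≤ ncard A
    have hsub : {t : ℤ | t < j ∧ σ j < σ t} ⊆ Aset σ i (j-1) := by
      rintro t ⟨ht1, ht2⟩
      exact ⟨by omega, fun he => by subst he; omega, lt_trans h ht2⟩
    constructor
    · intro _; exact h
    · intro _; exact Set.ncard_le_ncard hsub (Aset_finite σ hσ i (j-1))

lemma Astep (σ : Equiv.Perm ℤ) (hσ : IsBalanced σ) {i j : ℤ} (hij : i < j) :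
    (Aset σ i j).ncard = (Aset σ i (j-1)).ncard + if σ i < σ j then 1 else 0 := by
  have hne : σ j ≠ σ i := fun h => (ne_of_gt hij) (σ.injective h)
  by_cases h : σ i < σ j
  · rw [if_pos h]
    have : Aset σ i j = insert j (Aset σ i (j-1)) := by
      ext t
      simp only [Aset, Set.mem_setOf_eq, Set.mem_insert_iff]
      constructor
      · rintro ⟨h1, h2, h3⟩
        rcases eq_or_lt_of_le h1 with rfl | hlt
        · exact Or.inl rfl
        · exact Or.inr ⟨by omega, h2, h3⟩
      · rintro (rfl | ⟨h1, h2, h3⟩)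
        · exact ⟨le_refl _, ne_of_gt hij, h⟩
        · exact ⟨by omega, h2, h3⟩
    rw [this, Set.ncard_insert_of_notMem (fun ht => absurd ht.1 (by omega))
      (Aset_finite σ hσ i (j-1))]
  · have hset : Aset σ i j = Aset σ i (j-1) := by
      ext t
      simp only [Aset, Set.mem_setOf_eq]
      constructor
      · rintro ⟨h1, h2, h3⟩
        rcases eq_or_lt_of_le h1 with heq | hlt
        · exact absurd (heq ▸ h3) h
        · exact ⟨by omega, h2, h3⟩
      · rintro ⟨h1, h2, h3⟩
        exact ⟨by omega, h2, h3⟩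
    rw [if_neg h, add_zero, hset]

lemma iter_eq (σ : Equiv.Perm ℤ) (hσ : IsBalanced σ) (i : ℤ) (k : ℕ) :
    iterL (linv σ) i k = (Aset σ i (i + k)).ncard := by
  induction k with
  | zero =>
    simp only [iterL, linv]
    congr 1
    ext t
    simp only [Aset, Set.mem_setOf_eq]
    constructor
    · rintro ⟨h1, h2⟩
      exact ⟨by push_cast; omega, ne_of_lt h1, h2⟩
    · rintro ⟨h1, h2, h3⟩
      push_cast at h1
      exact ⟨by omega, h3⟩
  | succ k ih =>
    have hij : i < i + (k:ℤ) + 1 := by omega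
    have hcmp := compare σ hσ hij
    have hstep := Astep σ hσ hij
    have hA : i + (k:ℤ) + 1 - 1 = i + (k:ℤ) := by ring
    rw [hA] at hcmp hstep
    rw [iterL, ih, show (((k+1:ℕ)):ℤ) = (k:ℤ)+1 from by push_cast; ring, ← add_assoc, hstep]
    congr 1
    by_cases h : σ i < σ (i + (k:ℤ) + 1)
    · rw [if_pos h, if_pos (hcmp.mpr h)]
    · rw [if_neg h, if_neg (fun hh => h (hcmp.mp hh))]

theorem stmt16 (σ : Equiv.Perm ℤ) (hσ : IsBalanced σ) (i : ℤ) :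
    rinv σ i = {j : ℤ | i < j ∧ iterL (linv σ) i (j - i).toNat < linv σ j}.ncard ∧
    rinv σ i = {j : ℤ | i < j ∧
      iterL (linv σ) i (j - 1 - i).toNat = iterL (linv σ) i (j - i).toNat}.ncard := by
  have key : ∀ j : ℤ, i < j →
      ((iterL (linv σ) i (j - i).toNat < linv σ j ↔ σ j < σ i) ∧
       (iterL (linv σ) i (j - 1 - i).toNat = iterL (linv σ) i (j - i).toNat ↔ σ j < σ i)) := by
    intro j hij
    have hne : σ j ≠ σ i := fun h => (ne_of_gt hij) (σ.injective h)
    have htn : (j - i).toNat = (j - 1 - i).toNat + 1 := by omega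
    have hc1 : i + ((j - i).toNat : ℤ) = j := by omega
    have hc2 : i + ((j - 1 - i).toNat : ℤ) = j - 1 := by omega
    have e1 : iterL (linv σ) i (j - i).toNat = (Aset σ i j).ncard := by
      rw [iter_eq σ hσ, hc1]
    have e2 : iterL (linv σ) i (j - 1 - i).toNat = (Aset σ i (j-1)).ncard := by
      rw [iter_eq σ hσ, hc2]
    have hstep := Astep σ hσ hij
    have hcmp := compare σ hσ hij
    constructor
    · rw [e1, hstep]
      rcases lt_or_gt_of_ne hne with h | h
      · simp only [if_neg (not_lt_of_gt h), add_zero]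
        have : ¬ (linv σ j ≤ (Aset σ i (j-1)).ncard) := fun hh => absurd (hcmp.mp hh) (not_lt_of_gt h)
        constructor
        · intro _; exact h
        · intro _; omega
      · simp only [if_pos h]
        have : linv σ j ≤ (Aset σ i (j-1)).ncard := hcmp.mpr h
        constructor
        · intro hh; omega
        · intro hh; exact absurd h (not_lt_of_gt hh)
    · rw [htn, iterL, e2, hc2]
      have harg : j - 1 + 1 = j := by ring
      rw [harg]
      rcases lt_or_gt_of_ne hne with h | h
      · have : ¬ (linv σ j ≤ (Aset σ i (j-1)).ncard) := fun hh => absurd (hcmp.mp hh) (not_lt_of_gt h)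
        rw [if_neg this, add_zero]
        exact ⟨fun _ => h, fun _ => rfl⟩
      · rw [if_pos (hcmp.mpr h)]
        constructor
        · intro hh; omega
        · intro hh; exact absurd h (not_lt_of_gt hh)
  constructor
  · unfold rinv
    congr 1
    ext j
    simp only [Set.mem_setOf_eq]
    constructor
    · rintro ⟨h1, h2⟩; exact ⟨h1, ((key j h1).1).mpr h2⟩
    · rintro ⟨h1, h2⟩; exact ⟨h1, ((key j h1).1).mp h2⟩
  · unfold rinv
    congr 1
    ext j
    simp only [Set.mem_setOf_eq]
    constructor
    · rintro ⟨h1, h2⟩; exact ⟨h1, ((key j h1).2).mpr h2⟩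
    · rintro ⟨h1, h2⟩; exact ⟨h1, ((key j h1).2).mp h2⟩
end
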